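/- arXiv:1107.3882 — 2 statements merged into one kernel-verified Lean document; each statement's English description precedes it below -/
import Mathlib

section
/- For any n ∈ ℕ, n ≥ 1, and any real numbers x₁,…,xₙ with |x₁| + ⋯ + |xₙ| < 1, the family (Ω(i₁,…,iₙ)·x₁^{i₁}⋯xₙ^{iₙ}) indexed by (i₁,…,iₙ) ∈ ℕⁿ is absolutely summable (i.e., the multiple power series F_n(x₁,…,xₙ) = Σ_{i₁,…,iₙ ≥ 0} Ω(i₁,…,iₙ) x₁^{i₁}⋯xₙ^{iₙ} converges absolutely). -/
/-!
A permutation counted by `Ω(a₁, …, a_m)` is monotone on each block, so it is determined by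
the set of values it takes on each block. Peeling off the first block (its value set, then the
standardized remainder) gives `Ω(a) · ∏ aₖ! ≤ (N + 1)!`, i.e. `Ω(i) ≤ (N + 1) · multinomial(i)`.
By the multinomial theorem `multinomial(i) · ∏ |xₖ|^iₖ ≤ r^N` with `r = ∑ |xₖ| < 1`, and
`(N + 1) r^N ≤ ∏ₖ (iₖ + 1) r^iₖ`, whose sum over `ℕⁿ` is a product of `n` convergent series.
-/

/-- The monotonicity condition: for the list of block lengths `a`, a permutation `τ` of
`{0, …, a.sum}` must increase on the `k`-th block for even `k` (0-indexed, i.e. odd blocks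
in 1-indexed counting) and decrease on the `k`-th block for odd `k`. -/
def MonotCond (a : List ℕ) (τ : Equiv.Perm (Fin (a.sum + 1))) : Prop :=
  ∀ k, k < a.length →
    ∀ j, (a.take k).sum ≤ j → j < (a.take (k + 1)).sum →
      ∀ h : j + 1 < a.sum + 1,
        if k % 2 = 0
        then τ ⟨j, Nat.lt_of_succ_lt h⟩ < τ ⟨j + 1, h⟩
        else τ ⟨j + 1, h⟩ < τ ⟨j, Nat.lt_of_succ_lt h⟩

/-- `Omega a` is the number of permutations of `{0, …, a.sum}` with the prescribed
alternating monotonicity pattern given by the block lengths in `a`. -/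
noncomputable def Omega (a : List ℕ) : ℕ :=
  Nat.card {τ : Equiv.Perm (Fin (a.sum + 1)) // MonotCond a τ}

open Finset

namespace Function.Embedding

lemma card_map_univ {α : Type*} {m : ℕ} (e : Fin m ↪ α) : #(univ.map e) = m := by simp

variable {α : Type*} [LinearOrder α] {m : ℕ}

noncomputable def standardize (e : Fin m ↪ α) : Equiv.Perm (Fin m) :=
  Equiv.ofBijective
    (fun j => ((univ.map e).orderIsoOfFin e.card_map_univ).symm
      ⟨e j, mem_map_of_mem e (mem_univ j)⟩)
    (Finite.injective_iff_bijective.mp fun i j h => e.injective (by simpa using h))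

lemma standardize_lt_standardize_iff (e : Fin m ↪ α) (i j : Fin m) :
    e.standardize i < e.standardize j ↔ e i < e j := by
  simp [standardize]

lemma orderEmbOfFin_standardize (e : Fin m ↪ α) (j : Fin m) :
    (univ.map e).orderEmbOfFin e.card_map_univ (e.standardize j) = e j := by
  simp [standardize, ← coe_orderIsoOfFin_apply]

lemma eq_of_map_univ_eq_of_standardize_eq {e₁ e₂ : Fin m ↪ α} (hmap : univ.map e₁ = univ.map e₂)
    (hstd : e₁.standardize = e₂.standardize) : e₁ = e₂ := by
  ext j
  rw [← orderEmbOfFin_standardize e₁, ← orderEmbOfFin_standardize e₂, hstd]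
  simp_rw [hmap]

end Function.Embedding

namespace Equiv.Perm

variable {a m : ℕ}

def headEmb (τ : Equiv.Perm (Fin (a + m))) : Fin a ↪ Fin (a + m) :=
  (Fin.castAddEmb m).trans τ.toEmbedding

def tailEmb (τ : Equiv.Perm (Fin (a + m))) : Fin m ↪ Fin (a + m) :=
  (Fin.natAddEmb a).trans τ.toEmbedding

lemma map_univ_tailEmb (τ : Equiv.Perm (Fin (a + m))) :
    univ.map τ.tailEmb = (univ.map τ.headEmb)ᶜ := by
  ext v
  obtain ⟨w, rfl⟩ := τ.surjective v
  refine Fin.addCases (fun t => ?_) (fun j => ?_) w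
  · simpa [headEmb, tailEmb, Fin.ext_iff] using fun j : Fin m => (by omega : a + (j : ℕ) ≠ t)
  · simpa [headEmb, tailEmb, Fin.ext_iff] using fun t : Fin a => (by omega : (t : ℕ) ≠ a + j)

lemma ext_headEmb_tailEmb {τ₁ τ₂ : Equiv.Perm (Fin (a + m))} (hhead : τ₁.headEmb = τ₂.headEmb)
    (htail : τ₁.tailEmb = τ₂.tailEmb) : τ₁ = τ₂ :=
  Equiv.ext (Fin.addCases (DFunLike.congr_fun hhead) (DFunLike.congr_fun htail))

lemma card_le_choose_mul_card {P : Equiv.Perm (Fin (a + m)) → Prop}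
    {Q : Equiv.Perm (Fin m) → Prop}
    (hQ : ∀ τ, P τ → Q τ.tailEmb.standardize)
    (hhead : ∀ τ₁ τ₂, P τ₁ → P τ₂ → univ.map τ₁.headEmb = univ.map τ₂.headEmb →
      τ₁.headEmb = τ₂.headEmb) :
    Nat.card {τ // P τ} ≤ (a + m).choose a * Nat.card {σ // Q σ} := by
  let F : {τ // P τ} → {s : Finset (Fin (a + m)) // #s = a} × {σ // Q σ} :=
    fun τ => (⟨univ.map τ.1.headEmb, τ.1.headEmb.card_map_univ⟩, ⟨_, hQ τ.1 τ.2⟩)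
  have hF : F.Injective := by
    rintro ⟨τ₁, h₁⟩ ⟨τ₂, h₂⟩ h
    simp only [F, Prod.mk.injEq, Subtype.mk.injEq] at h
    obtain ⟨hmap, hstd⟩ := h
    refine Subtype.ext (ext_headEmb_tailEmb (hhead τ₁ τ₂ h₁ h₂ hmap) ?_)
    exact Function.Embedding.eq_of_map_univ_eq_of_standardize_eq
      (by rw [map_univ_tailEmb, map_univ_tailEmb, hmap]) hstd
  calc Nat.card {τ // P τ} ≤ Nat.card ({s : Finset (Fin (a + m)) // #s = a} × {σ // Q σ}) :=
        Nat.card_le_card_of_injective F hF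
    _ = (a + m).choose a * Nat.card {σ // Q σ} := by
        rw [Nat.card_prod, Nat.card_eq_fintype_card (α := {s : Finset _ // _}),
          Fintype.card_finset_len, Fintype.card_fin]

end Equiv.Perm

-- `MonotCond` is the case `up k ↔ k % 2 = 0`; removing the first block shifts `up` by one.
def BlockMonotone (up : ℕ → Prop) [DecidablePred up] (a : List ℕ)
    (τ : Equiv.Perm (Fin (a.sum + 1))) : Prop :=
  ∀ k, k < a.length →
    ∀ j, (a.take k).sum ≤ j → j < (a.take (k + 1)).sum →
      ∀ h : j + 1 < a.sum + 1,
        if up k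
        then τ ⟨j, Nat.lt_of_succ_lt h⟩ < τ ⟨j + 1, h⟩
        else τ ⟨j + 1, h⟩ < τ ⟨j, Nat.lt_of_succ_lt h⟩

namespace BlockMonotone

variable {up : ℕ → Prop} [DecidablePred up] {a₀ : ℕ} {rest : List ℕ}
  {τ : Equiv.Perm (Fin (a₀ + (rest.sum + 1)))}

lemma headEmb_strictMono (hτ : BlockMonotone up (a₀ :: rest) τ) (hup : up 0) :
    StrictMono τ.headEmb := by
  cases a₀ with
  | zero => exact Subsingleton.strictMono _
  | succ a₀ =>
    refine Fin.strictMono_iff_lt_succ.2 fun i => ?_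
    have key := hτ 0 (by simp) i (by simp) (by simp) (by simp; omega)
    rw [if_pos hup] at key
    exact key

lemma headEmb_strictAnti (hτ : BlockMonotone up (a₀ :: rest) τ) (hup : ¬ up 0) :
    StrictAnti τ.headEmb := by
  cases a₀ with
  | zero => exact Subsingleton.strictAnti _
  | succ a₀ =>
    refine Fin.strictAnti_iff_succ_lt.2 fun i => ?_
    have key := hτ 0 (by simp) i (by simp) (by simp) (by simp; omega)
    rw [if_neg hup] at key
    exact key

lemma headEmb_eq {τ' : Equiv.Perm (Fin (a₀ + (rest.sum + 1)))}
    (hτ : BlockMonotone up (a₀ :: rest) τ) (hτ' : BlockMonotone up (a₀ :: rest) τ')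
    (hmap : univ.map τ.headEmb = univ.map τ'.headEmb) : τ.headEmb = τ'.headEmb := by
  have hrange : Set.range τ.headEmb = Set.range τ'.headEmb := by
    simpa using Finset.coe_inj.2 hmap
  refine DFunLike.coe_injective ?_
  by_cases hup : up 0
  · exact Set.range_injOn_strictMono (hτ.headEmb_strictMono hup) (hτ'.headEmb_strictMono hup)
      hrange
  · exact Set.range_injOn_strictAnti (hτ.headEmb_strictAnti hup) (hτ'.headEmb_strictAnti hup)
      hrange

lemma standardize_tailEmb (hτ : BlockMonotone up (a₀ :: rest) τ) :
    BlockMonotone (fun k => up (k + 1)) rest τ.tailEmb.standardize := by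
  intro k hk j hj₁ hj₂ h
  have key :=
    hτ (k + 1) (by simp; omega) (a₀ + j) (by simp; omega) (by simp; omega) (by simp; omega)
  split_ifs at key ⊢ <;>
    exact (Function.Embedding.standardize_lt_standardize_iff _ _ _).2 key

end BlockMonotone

theorem card_blockMonotone_mul_prod_factorial_le (a : List ℕ) (up : ℕ → Prop)
    [DecidablePred up] :
    Nat.card {τ // BlockMonotone up a τ} * (a.map Nat.factorial).prod ≤
      (a.sum + 1).factorial := by
  induction a generalizing up with
  | nil =>
    simpa using Nat.card_le_card_of_injective _ (Subtype.coe_injective (p := BlockMonotone up []))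
  | cons a₀ rest ih =>
    have hstep := Equiv.Perm.card_le_choose_mul_card (a := a₀) (m := rest.sum + 1)
      (P := BlockMonotone up (a₀ :: rest)) (Q := BlockMonotone (fun k => up (k + 1)) rest)
      (fun _ hτ => hτ.standardize_tailEmb) (fun _ _ hτ hτ' => hτ.headEmb_eq hτ')
    set C := Nat.card {σ // BlockMonotone (fun k => up (k + 1)) rest σ}
    set P := (rest.map Nat.factorial).prod
    calc Nat.card {τ // BlockMonotone up (a₀ :: rest) τ} * (a₀.factorial * P)
        ≤ (a₀ + (rest.sum + 1)).choose a₀ * C * (a₀.factorial * P) :=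
          Nat.mul_le_mul_right _ hstep
      _ = (a₀ + (rest.sum + 1)).choose a₀ * a₀.factorial * (C * P) := by ring
      _ ≤ (a₀ + (rest.sum + 1)).choose a₀ * a₀.factorial * (rest.sum + 1).factorial :=
          Nat.mul_le_mul_left _ (ih _)
      _ = (a₀ + (rest.sum + 1)).factorial := by
          simpa using Nat.choose_mul_factorial_mul_factorial (Nat.le_add_right a₀ (rest.sum + 1))

theorem omega_mul_prod_factorial_le (a : List ℕ) :
    Omega a * (a.map Nat.factorial).prod ≤ (a.sum + 1).factorial :=
  card_blockMonotone_mul_prod_factorial_le a (fun k => k % 2 = 0)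

theorem omega_ofFn_le {n : ℕ} (i : Fin n → ℕ) :
    Omega (List.ofFn i) ≤ (∑ k, i k + 1) * Nat.multinomial univ i := by
  have h := omega_mul_prod_factorial_le (List.ofFn i)
  simp only [List.sum_ofFn, List.map_ofFn, List.prod_ofFn, Function.comp_apply,
    Nat.factorial_succ, ← Nat.multinomial_spec] at h
  exact Nat.le_of_mul_le_mul_right (h.trans_eq (by ring))
    (prod_pos fun k _ => Nat.factorial_pos (i k))

lemma Nat.multinomial_mul_prod_pow_le_sum_pow {ι R : Type*} [Fintype ι] [CommSemiring R]
    [PartialOrder R] [IsOrderedRing R] (f : ι → ℕ) {y : ι → R} (hy : ∀ k, 0 ≤ y k) :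
    (Nat.multinomial univ f : R) * ∏ k, y k ^ f k ≤ (∑ k, y k) ^ ∑ k, f k := by
  classical
  rw [sum_pow_eq_sum_piAntidiag]
  exact single_le_sum (f := fun g => (Nat.multinomial univ g : R) * ∏ k, y k ^ g k)
    (fun g _ => mul_nonneg (Nat.cast_nonneg _) (prod_nonneg fun k _ => pow_nonneg (hy k) _))
    (mem_piAntidiag.2 ⟨rfl, by simp⟩)

lemma Finset.sum_add_one_le_prod_add_one {ι : Type*} (s : Finset ι) (f : ι → ℕ) :
    ∑ k ∈ s, f k + 1 ≤ ∏ k ∈ s, (f k + 1) := by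
  classical
  induction s using Finset.induction_on with
  | empty => simp
  | insert a s ha ih =>
    rw [sum_insert ha, prod_insert ha]
    calc f a + ∑ k ∈ s, f k + 1 ≤ (f a + 1) * (∑ k ∈ s, f k + 1) := by
          nlinarith [Nat.zero_le (f a * ∑ k ∈ s, f k)]
      _ ≤ (f a + 1) * ∏ k ∈ s, (f k + 1) := by gcongr

lemma summable_prod_pi_of_nonneg {β : Type*} {n : ℕ} {f : Fin n → β → ℝ}
    (hf : ∀ k, Summable (f k)) (hf₀ : ∀ k b, 0 ≤ f k b) :
    Summable fun i : Fin n → β => ∏ k, f k (i k) := by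
  induction n with
  | zero => simpa using summable_of_hasFiniteSupport (Set.toFinite _)
  | succ n ih =>
    have hprod := (hf 0).mul_of_nonneg (ih (fun k => hf k.succ) (fun k => hf₀ k.succ))
      (hf₀ 0) (fun i => prod_nonneg fun k _ => hf₀ k.succ (i k))
    refine (Fin.consEquiv fun _ => β).summable_iff.1 (hprod.congr fun p => ?_)
    simp [Fin.consEquiv, Fin.prod_univ_succ]

lemma summable_succ_mul_pow {r : ℝ} (h₀ : 0 ≤ r) (h₁ : r < 1) :
    Summable fun m : ℕ => ((m : ℝ) + 1) * r ^ m := by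
  have hr : ‖r‖ < 1 := by rwa [Real.norm_eq_abs, abs_of_nonneg h₀]
  simpa [add_mul] using (summable_pow_mul_geometric_of_norm_lt_one 1 hr).add
    (summable_geometric_of_lt_one h₀ h₁)

lemma abs_omega_mul_prod_pow_le {n : ℕ} (x : Fin n → ℝ) (i : Fin n → ℕ) :
    |(Omega (List.ofFn i) : ℝ) * ∏ k, x k ^ i k| ≤
      ∏ k, (((i k : ℝ) + 1) * (∑ l, |x l|) ^ i k) := by
  have hΩ : (Omega (List.ofFn i) : ℝ) ≤ ((∑ k, i k : ℕ) + 1) * Nat.multinomial univ i :=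
    mod_cast omega_ofFn_le i
  calc |(Omega (List.ofFn i) : ℝ) * ∏ k, x k ^ i k|
      = Omega (List.ofFn i) * ∏ k, |x k| ^ i k := by simp [abs_mul, abs_prod, abs_pow]
    _ ≤ ((∑ k, i k : ℕ) + 1) * (Nat.multinomial univ i * ∏ k, |x k| ^ i k) := by
        rw [← mul_assoc]; gcongr
    _ ≤ (∑ k, (i k : ℝ) + 1) * (∑ l, |x l|) ^ ∑ k, i k := by
        push_cast
        gcongr
        exact Nat.multinomial_mul_prod_pow_le_sum_pow i fun k => abs_nonneg (x k)
    _ ≤ (∏ k, ((i k : ℝ) + 1)) * ∏ k, (∑ l, |x l|) ^ i k := by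
        rw [prod_pow_eq_pow_sum]
        gcongr
        exact_mod_cast sum_add_one_le_prod_add_one univ i
    _ = ∏ k, (((i k : ℝ) + 1) * (∑ l, |x l|) ^ i k) := prod_mul_distrib.symm

theorem stmt_3_general (n : ℕ) (x : Fin n → ℝ)
    (hx : ∑ k : Fin n, |x k| < 1) :
    Summable (fun i : Fin n → ℕ =>
      |(Omega (List.ofFn i) : ℝ) * ∏ k : Fin n, x k ^ i k|) := by
  have hr : 0 ≤ ∑ k, |x k| := sum_nonneg fun k _ => abs_nonneg (x k)
  have hmajorant : Summable fun i : Fin n → ℕ => ∏ k, (((i k : ℝ) + 1) * (∑ l, |x l|) ^ i k) :=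
    summable_prod_pi_of_nonneg (f := fun _ (m : ℕ) => ((m : ℝ) + 1) * (∑ l, |x l|) ^ m)
      (fun _ => summable_succ_mul_pow hr hx) fun _ _ => by positivity
  exact .of_nonneg_of_le (fun _ => abs_nonneg _) (abs_omega_mul_prod_pow_le x) hmajorant

theorem stmt_3 (n : ℕ) (hn : 1 ≤ n) (x : Fin n → ℝ)
    (hx : ∑ k : Fin n, |x k| < 1) :
    Summable (fun i : Fin n → ℕ =>
      |(Omega (List.ofFn i) : ℝ) * ∏ k : Fin n, x k ^ i k|) :=
  stmt_3_general n x hx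
end

section
/- For any n ∈ ℕ, n ≥ 1, and any positive integers i₁, j₁, …, iₙ, jₙ with N := i₁ + j₁ + ⋯ + iₙ + jₙ, one has Ω'(i₁, j₁, …, iₙ, jₙ) = (1/(N+1)) · Σ_{k=0}^{n} Ω'(i₁, j₁, …, i_k, j_k − 1) · Ω'(i_{k+1} − 1, j_{k+1}, …, iₙ, jₙ), where for k = 0 the first factor is Ω' with an empty list of arguments (equal to 1) and the second factor is Ω'(i₁ − 1, j₁, i₂, j₂, …, iₙ, jₙ), and for k = n the second factor is Ω' with an empty list of arguments (equal to 1). -/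
/-- The normalized quantity `Ω'(a) = Ω(a) / (N + 1)!` where `N = a.sum`. -/
noncomputable def Omega' (a : List ℕ) : ℝ :=
  (Omega a : ℝ) / (Nat.factorial (a.sum + 1))

/-- The interleaved list `[i t₁, j t₁, i t₂, j t₂, …]` for the indices in `l`. -/
def pairList (i j : ℕ → ℕ) (l : List ℕ) : List ℕ :=
  (l.map fun t => [i t, j t]).flatten

/-!
Sort the permutations by the position `p` of their minimum `0`. The pattern forces `p` to be a
valley (a descent, or the left end, before it; an ascent, or the right end, after it). The
values to the left of `p` are then an arbitrary `p`-subset of `{1, …, N}`, arranged according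
to the first `p` steps of the pattern, and the values to the right are its complement, arranged
according to the remaining steps. Hence the count is `∑ C(N, p) · (left count) · (right count)`
over the valleys `p`. For runs `i₁` up, `j₁` down, …, `iₙ` up, `jₙ` down of positive lengths
the valleys are exactly the run starts `p = i₁ + j₁ + ⋯ + i_k + j_k`, the two patterns are
those of `(i₁, j₁, …, i_k, j_k - 1)` and `(i_{k+1} - 1, j_{k+1}, …, iₙ, jₙ)`, and dividing by
`(N + 1)! = (N + 1) · p! · (N - p)! · C(N, p)` gives the formula.
-/

open Equiv Finset
open scoped Nat

def FollowsUpDown {α : Type*} [LinearOrder α] (w : ℕ → Bool) {m : ℕ} (f : Fin m → α) : Prop :=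
  ∀ q (h : q + 1 < m),
    if w q then f ⟨q, by omega⟩ < f ⟨q + 1, h⟩ else f ⟨q + 1, h⟩ < f ⟨q, by omega⟩

noncomputable def upDownCount (m : ℕ) (w : ℕ → Bool) : ℕ :=
  Nat.card {τ : Perm (Fin m) // FollowsUpDown w τ}

def IsValley (w : ℕ → Bool) (n p : ℕ) : Prop :=
  (p = 0 ∨ w (p - 1) = false) ∧ (p = n ∨ w p = true)

instance (w : ℕ → Bool) (n p : ℕ) : Decidable (IsValley w n p) :=
  inferInstanceAs (Decidable (_ ∧ _))

section UpDown

variable {α β : Type*} [LinearOrder α] [LinearOrder β] {w : ℕ → Bool}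

theorem followsUpDown_comp_iff {m : ℕ} {g : α → β} (hg : StrictMono g) (f : Fin m → α) :
    FollowsUpDown w (g ∘ f) ↔ FollowsUpDown w f := by
  simp only [FollowsUpDown, Function.comp_apply, hg.lt_iff_lt]

theorem upDownCount_congr {m : ℕ} {w w' : ℕ → Bool} (h : ∀ q, q + 1 < m → w q = w' q) :
    upDownCount m w = upDownCount m w' :=
  Nat.card_congr <| Equiv.subtypeEquivRight fun τ =>
    forall_congr' fun q => forall_congr' fun hq => by rw [h q hq]

theorem followsUpDown_iff_of_isMin {n p : ℕ} (hp : p ≤ n) {f : Fin (n + 1) → α}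
    (hmin : ∀ q : Fin (n + 1), (q : ℕ) ≠ p → f ⟨p, by omega⟩ < f q) :
    FollowsUpDown w f ↔ IsValley w n p ∧
      FollowsUpDown w (fun x : Fin p => f ⟨x, by omega⟩) ∧
      FollowsUpDown (fun t => w (p + 1 + t))
        (fun y : Fin (n - p) => f ⟨p + 1 + y, by omega⟩) := by
  constructor
  · intro hf
    refine ⟨⟨?_, ?_⟩, fun q hq => hf q (by omega), fun t ht => hf (p + 1 + t) (by omega)⟩
    · by_contra! h
      have hstep := hf (p - 1) (by omega)
      simp only [h.2, if_true, Nat.sub_add_cancel (Nat.pos_of_ne_zero h.1)] at hstep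
      exact lt_asymm hstep (hmin ⟨p - 1, by omega⟩ (by dsimp only; omega))
    · by_contra! h
      have hstep := hf p (by omega)
      simp only [h.2] at hstep
      exact lt_asymm hstep (hmin ⟨p + 1, by omega⟩ (by simp))
  · rintro ⟨⟨hv₁, hv₂⟩, hleft, hright⟩ q hq
    rcases lt_trichotomy (q + 1) p with h | h | h
    · exact hleft q h
    · obtain rfl : q = p - 1 := by omega
      have hw : w (p - 1) = false := hv₁.resolve_left (by omega)
      simpa [hw, h] using hmin ⟨p - 1, by omega⟩ (by dsimp only; omega)
    · rcases Nat.lt_or_ge p q with h' | h'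
      · obtain ⟨t, rfl⟩ : ∃ t, q = p + 1 + t := ⟨q - (p + 1), by omega⟩
        exact hright t (by omega)
      · obtain rfl : q = p := by omega
        have hw : w q = true := hv₂.resolve_left (by omega)
        simpa [hw] using hmin ⟨q + 1, hq⟩ (by simp)

end UpDown

section Merge

variable {n p : ℕ} (s : Finset (Fin n)) (hs : #s = p) (σ : Perm (Fin p))
  (ρ : Perm (Fin (n - p)))

include hs in
theorem card_compl_of_card_eq : #sᶜ = n - p := by
  rw [card_compl, hs, Fintype.card_fin]

include hs in
theorem le_of_card_finset_eq : p ≤ n := by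
  simpa [hs] using card_le_univ s

def mergeFun (q : Fin (n + 1)) : Fin (n + 1) :=
  if h : (q : ℕ) < p then (s.orderEmbOfFin hs (σ ⟨q, h⟩)).succ
  else if _ : (q : ℕ) = p then 0
  else (sᶜ.orderEmbOfFin (card_compl_of_card_eq s hs)
    (ρ ⟨q - (p + 1), by have := q.isLt; omega⟩)).succ

theorem mergeFun_of_lt (q : Fin (n + 1)) (hq : (q : ℕ) < p) :
    mergeFun s hs σ ρ q = (s.orderEmbOfFin hs (σ ⟨q, hq⟩)).succ :=
  dif_pos hq

theorem mergeFun_of_eq (q : Fin (n + 1)) (hq : (q : ℕ) = p) : mergeFun s hs σ ρ q = 0 := by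
  rw [mergeFun, dif_neg (by omega), dif_pos hq]

theorem mergeFun_of_gt (q : Fin (n + 1)) (hq : p < (q : ℕ)) :
    mergeFun s hs σ ρ q = (sᶜ.orderEmbOfFin (card_compl_of_card_eq s hs)
      (ρ ⟨q - (p + 1), by omega⟩)).succ := by
  rw [mergeFun, dif_neg (by omega), dif_neg (by omega)]

theorem mergeFun_eq_zero_iff (q : Fin (n + 1)) : mergeFun s hs σ ρ q = 0 ↔ (q : ℕ) = p := by
  refine ⟨fun h => ?_, mergeFun_of_eq s hs σ ρ q⟩
  by_contra hne
  rcases Nat.lt_or_gt_of_ne hne with hlt | hgt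
  · exact Fin.succ_ne_zero _ ((mergeFun_of_lt s hs σ ρ q hlt).symm.trans h)
  · exact Fin.succ_ne_zero _ ((mergeFun_of_gt s hs σ ρ q hgt).symm.trans h)

theorem mergeFun_surjective : Function.Surjective (mergeFun s hs σ ρ) := by
  have hpn := le_of_card_finset_eq s hs
  intro v
  rcases Fin.eq_zero_or_eq_succ v with rfl | ⟨u, rfl⟩
  · exact ⟨⟨p, by omega⟩, mergeFun_of_eq s hs σ ρ _ rfl⟩
  by_cases hu : u ∈ s
  · obtain ⟨x, rfl⟩ : u ∈ Set.range (s.orderEmbOfFin hs) := by rwa [range_orderEmbOfFin]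
    refine ⟨⟨σ.symm x, by omega⟩, ?_⟩
    simp [mergeFun_of_lt s hs σ ρ ⟨σ.symm x, _⟩ (σ.symm x).isLt]
  · obtain ⟨y, rfl⟩ : u ∈ Set.range (sᶜ.orderEmbOfFin (card_compl_of_card_eq s hs)) := by
      rwa [range_orderEmbOfFin, coe_compl, Set.mem_compl_iff, mem_coe]
    refine ⟨⟨p + 1 + ρ.symm y, by omega⟩, ?_⟩
    simp [mergeFun_of_gt s hs σ ρ ⟨p + 1 + ρ.symm y, _⟩ (by dsimp only; omega)]

noncomputable def mergePerm : Perm (Fin (n + 1)) :=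
  Equiv.ofBijective (mergeFun s hs σ ρ)
    (Finite.surjective_iff_bijective.mp (mergeFun_surjective s hs σ ρ))

theorem mergePerm_apply (q : Fin (n + 1)) : mergePerm s hs σ ρ q = mergeFun s hs σ ρ q := rfl

theorem followsUpDown_mergePerm_iff (w : ℕ → Bool) :
    FollowsUpDown w (mergePerm s hs σ ρ) ↔
      IsValley w n p ∧ FollowsUpDown w σ ∧ FollowsUpDown (fun t => w (p + 1 + t)) ρ := by
  have hpn := le_of_card_finset_eq s hs
  have hmin (q : Fin (n + 1)) (hq : (q : ℕ) ≠ p) :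
      mergePerm s hs σ ρ ⟨p, by omega⟩ < mergePerm s hs σ ρ q := by
    simp only [mergePerm_apply, mergeFun_of_eq s hs σ ρ ⟨p, _⟩ rfl]
    rcases Nat.lt_or_gt_of_ne hq with hlt | hgt
    · simp [mergeFun_of_lt s hs σ ρ q hlt, Fin.succ_pos]
    · simp [mergeFun_of_gt s hs σ ρ q hgt, Fin.succ_pos]
  have hleft : (fun x : Fin p => mergePerm s hs σ ρ ⟨x, by omega⟩) =
      (Fin.succ ∘ s.orderEmbOfFin hs) ∘ σ := by
    funext x
    simp [mergePerm_apply, mergeFun_of_lt s hs σ ρ ⟨x, _⟩ x.isLt]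
  have hright : (fun y : Fin (n - p) => mergePerm s hs σ ρ ⟨p + 1 + y, by omega⟩) =
      (Fin.succ ∘ sᶜ.orderEmbOfFin (card_compl_of_card_eq s hs)) ∘ ρ := by
    funext y
    simp [mergePerm_apply, mergeFun_of_gt s hs σ ρ ⟨p + 1 + y, _⟩ (by dsimp only; omega)]
  rw [followsUpDown_iff_of_isMin hpn hmin, hleft, hright,
    followsUpDown_comp_iff (Fin.strictMono_succ.comp (OrderEmbedding.strictMono _)),
    followsUpDown_comp_iff (Fin.strictMono_succ.comp (OrderEmbedding.strictMono _))]

end Merge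

abbrev MergeData (n : ℕ) :=
  Σ p : Fin (n + 1), {s : Finset (Fin n) // #s = p} × Perm (Fin p) × Perm (Fin (n - p))

noncomputable def MergeData.toPerm {n : ℕ} : MergeData n → Perm (Fin (n + 1))
  | ⟨_, ⟨s, hs⟩, σ, ρ⟩ => mergePerm s hs σ ρ

theorem MergeData.toPerm_injective (n : ℕ) : Function.Injective (MergeData.toPerm (n := n)) := by
  rintro ⟨p, ⟨s, hs⟩, σ, ρ⟩ ⟨p', ⟨s', hs'⟩, σ', ρ'⟩ h
  replace h : mergePerm s hs σ ρ = mergePerm s' hs' σ' ρ' := h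
  have hpn := le_of_card_finset_eq s hs
  obtain rfl : p = p' := by
    have h0 := mergeFun_of_eq s hs σ ρ ⟨p, by omega⟩ rfl
    rw [← mergePerm_apply, h, mergePerm_apply, mergeFun_eq_zero_iff] at h0
    exact Fin.ext (by simpa using h0)
  have hleft : s.orderEmbOfFin hs ∘ σ = s'.orderEmbOfFin hs' ∘ σ' := by
    funext x
    have hx := congr($h ⟨x, by omega⟩)
    simpa [mergePerm_apply, mergeFun_of_lt _ _ _ _ ⟨x, _⟩ x.isLt] using hx
  obtain rfl : s = s' := by
    have hrange := congrArg Set.range hleft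
    rwa [σ.surjective.range_comp, σ'.surjective.range_comp, range_orderEmbOfFin,
      range_orderEmbOfFin, coe_inj] at hrange
  obtain rfl : hs = hs' := rfl
  have hright : sᶜ.orderEmbOfFin (card_compl_of_card_eq s hs) ∘ ρ =
      sᶜ.orderEmbOfFin (card_compl_of_card_eq s hs) ∘ ρ' := by
    funext y
    have hy := congr($h ⟨p + 1 + y, by omega⟩)
    have hgt : (p : ℕ) < p + 1 + y := by omega
    simpa [mergePerm_apply, mergeFun_of_gt s hs σ ρ ⟨p + 1 + y, _⟩ hgt,
      mergeFun_of_gt s hs σ' ρ' ⟨p + 1 + y, _⟩ hgt] using hy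
  obtain rfl : σ = σ' := Equiv.ext fun x => (s.orderEmbOfFin hs).injective (congrFun hleft x)
  obtain rfl : ρ = ρ' := Equiv.ext fun y => (sᶜ.orderEmbOfFin _).injective (congrFun hright y)
  rfl

theorem card_finset_card_eq (n p : ℕ) : Nat.card {s : Finset (Fin n) // #s = p} = n.choose p := by
  rw [Nat.card_eq_fintype_card, Fintype.card_finset_len, Fintype.card_fin]

theorem card_mergeData (n : ℕ) : Nat.card (MergeData n) = (n + 1)! := by
  have hfiber (p : Fin (n + 1)) :
      Nat.card ({s : Finset (Fin n) // #s = p} × Perm (Fin p) × Perm (Fin (n - p))) = n ! := by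
    rw [Nat.card_prod, Nat.card_prod, Nat.card_perm, Nat.card_perm, card_finset_card_eq,
      Nat.card_fin, Nat.card_fin, ← mul_assoc, Nat.choose_mul_factorial_mul_factorial (by omega)]
  rw [Nat.card_sigma]
  simp only [hfiber]
  simp [Nat.factorial_succ]

theorem MergeData.toPerm_bijective (n : ℕ) : Function.Bijective (MergeData.toPerm (n := n)) :=
  (Nat.bijective_iff_injective_and_card _).2
    ⟨MergeData.toPerm_injective n, by rw [card_mergeData, Nat.card_perm, Nat.card_fin]⟩

theorem upDownCount_succ (n : ℕ) (w : ℕ → Bool) :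
    upDownCount (n + 1) w = ∑ p ∈ range (n + 1),
      if IsValley w n p then
        n.choose p * (upDownCount p w * upDownCount (n - p) (fun t => w (p + 1 + t)))
      else 0 := by
  have hfiber (p : Fin (n + 1)) :
      Nat.card {x : {s : Finset (Fin n) // #s = p} × Perm (Fin p) × Perm (Fin (n - p)) //
        IsValley w n p ∧ FollowsUpDown w x.2.1 ∧ FollowsUpDown (fun t => w (p + 1 + t)) x.2.2} =
      if IsValley w n p then
        n.choose p * (upDownCount p w * upDownCount (n - p) (fun t => w (p + 1 + t)))
      else 0 := by
    split_ifs with hv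
    · simp only [hv, true_and]
      rw [upDownCount, upDownCount, ← Nat.card_prod, ← card_finset_card_eq, ← Nat.card_prod]
      exact Nat.card_congr
        ⟨fun x => (x.1.1, ⟨x.1.2.1, x.2.1⟩, ⟨x.1.2.2, x.2.2⟩),
          fun y => ⟨(y.1, y.2.1.1, y.2.2.1), y.2.1.2, y.2.2.2⟩, fun _ => rfl, fun _ => rfl⟩
    · simp [hv]
  calc upDownCount (n + 1) w
      = Nat.card {x : MergeData n // FollowsUpDown w x.toPerm} :=
        (Nat.card_congr ((Equiv.ofBijective _ (MergeData.toPerm_bijective n)).subtypeEquiv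
          fun _ => Iff.rfl)).symm
    _ = Nat.card (Σ p : Fin (n + 1),
          {x : {s : Finset (Fin n) // #s = p} × Perm (Fin p) × Perm (Fin (n - p)) //
            IsValley w n p ∧ FollowsUpDown w x.2.1 ∧
              FollowsUpDown (fun t => w (p + 1 + t)) x.2.2}) :=
        Nat.card_congr
          { toFun := fun x => ⟨x.1.1, x.1.2, (followsUpDown_mergePerm_iff _ _ _ _ w).1 x.2⟩
            invFun := fun y => ⟨⟨y.1, y.2.1⟩, (followsUpDown_mergePerm_iff _ _ _ _ w).2 y.2.2⟩
            left_inv := fun _ => rfl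
            right_inv := fun _ => rfl }
    _ = _ := by
      rw [Nat.card_sigma]
      simp only [hfiber]
      exact Fin.sum_univ_eq_sum_range (fun p => if IsValley w n p then n.choose p *
        (upDownCount p w * upDownCount (n - p) (fun t => w (p + 1 + t))) else 0) (n + 1)

/-- The block containing position `q` when `ℕ` is cut into consecutive intervals of lengths
`a₀, a₁, …`; it is `a.length` for `q ≥ a.sum`. -/
def blockIndex : List ℕ → ℕ → ℕ
  | [], _ => 0
  | x :: t, q => if q < x then 0 else blockIndex t (q - x) + 1

def ascentWord (a : List ℕ) (q : ℕ) : Bool := blockIndex a q % 2 = 0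

theorem blockIndex_eq_iff {a : List ℕ} {q : ℕ} (hq : q < a.sum) (k : ℕ) :
    blockIndex a q = k ↔ k < a.length ∧ (a.take k).sum ≤ q ∧ q < (a.take (k + 1)).sum := by
  induction a generalizing q k with
  | nil => simp at hq
  | cons x t ih =>
    simp only [List.sum_cons] at hq
    rcases k with _ | k
    · by_cases hqx : q < x <;> simp [blockIndex, hqx]
    · by_cases hqx : q < x
      · simp only [blockIndex, hqx, if_true, List.take_succ_cons, List.sum_cons]
        omega
      · simp only [blockIndex, hqx, if_false, Nat.add_right_cancel_iff, ih (q := q - x) (by omega),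
          List.length_cons, List.take_succ_cons, List.sum_cons]
        omega

theorem blockIndex_append_of_lt {a : List ℕ} (b : List ℕ) {q : ℕ} (hq : q < a.sum) :
    blockIndex (a ++ b) q = blockIndex a q := by
  induction a generalizing q with
  | nil => simp at hq
  | cons x t ih =>
    simp only [List.sum_cons] at hq
    by_cases hqx : q < x
    · simp [blockIndex, hqx]
    · simp only [List.cons_append, blockIndex, hqx, if_false, ih (q := q - x) (by omega)]

theorem blockIndex_append_sum_add (a b : List ℕ) (q : ℕ) :
    blockIndex (a ++ b) (a.sum + q) = a.length + blockIndex b q := by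
  induction a with
  | nil => simp
  | cons x t ih =>
    have hx : ¬ x + t.sum + q < x := by omega
    simp only [List.cons_append, List.sum_cons, blockIndex, hx, if_false, List.length_cons,
      show x + t.sum + q - x = t.sum + q by omega, ih]
    omega

theorem ascentWord_append_of_lt {a : List ℕ} (b : List ℕ) {q : ℕ} (hq : q < a.sum) :
    ascentWord (a ++ b) q = ascentWord a q := by
  simp only [ascentWord, blockIndex_append_of_lt b hq]

theorem ascentWord_append_sum_add {a : List ℕ} (ha : Even a.length) (b : List ℕ) (q : ℕ) :
    ascentWord (a ++ b) (a.sum + q) = ascentWord b q := by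
  obtain ⟨m, hm⟩ := ha
  simp only [ascentWord, blockIndex_append_sum_add, hm]
  congr 2
  omega

theorem ascentWord_cons_succ {x : ℕ} (hx : 0 < x) (b : List ℕ) (q : ℕ) :
    ascentWord (x :: b) (q + 1) = ascentWord ((x - 1) :: b) q := by
  by_cases hq : q + 1 < x
  · simp [ascentWord, blockIndex, hq, show q < x - 1 by omega]
  · simp [ascentWord, blockIndex, hq, show ¬ q < x - 1 by omega,
      show q + 1 - x = q - (x - 1) by omega]

theorem ascentWord_cons_cons (x y : ℕ) (b : List ℕ) {t : ℕ} (ht : t < x + y) :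
    ascentWord (x :: y :: b) t = decide (t < x) := by
  by_cases htx : t < x
  · simp [ascentWord, blockIndex, htx]
  · simp [ascentWord, blockIndex, htx, show t - x < y by omega]

theorem monotCond_iff_followsUpDown (a : List ℕ) (τ : Perm (Fin (a.sum + 1))) :
    MonotCond a τ ↔ FollowsUpDown (ascentWord a) τ := by
  constructor
  · intro hτ q hq
    obtain ⟨hk, hlo, hhi⟩ := (blockIndex_eq_iff (show q < a.sum by omega) _).1 rfl
    simpa [ascentWord] using hτ _ hk q hlo hhi hq
  · intro hτ k hk q hlo hhi hq
    have hblock := (blockIndex_eq_iff (show q < a.sum by omega) k).2 ⟨hk, hlo, hhi⟩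
    simpa [ascentWord, hblock] using hτ q hq

theorem omega_eq_upDownCount (a : List ℕ) : Omega a = upDownCount (a.sum + 1) (ascentWord a) :=
  Nat.card_congr (Equiv.subtypeEquivRight (monotCond_iff_followsUpDown a))

theorem omega'_eq_upDownCount (a : List ℕ) :
    Omega' a = upDownCount (a.sum + 1) (ascentWord a) / (a.sum + 1)! := by
  rw [Omega', omega_eq_upDownCount]

def blockStart (i j : ℕ → ℕ) (k : ℕ) : ℕ := ∑ t ∈ range k, (i t + j t)

theorem blockStart_succ (i j : ℕ → ℕ) (k : ℕ) :
    blockStart i j (k + 1) = blockStart i j k + (i k + j k) :=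
  sum_range_succ _ _

theorem blockStart_mono (i j : ℕ → ℕ) : Monotone (blockStart i j) := fun _ _ h =>
  sum_le_sum_of_subset (range_subset_range.2 h)

section PairList

variable (i j : ℕ → ℕ)

theorem pairList_append (l l' : List ℕ) :
    pairList i j (l ++ l') = pairList i j l ++ pairList i j l' := by
  simp [pairList]

theorem even_length_pairList (l : List ℕ) : Even (pairList i j l).length := by
  induction l with
  | nil => simp [pairList]
  | cons t l ih =>
    rw [← List.singleton_append, pairList_append, List.length_append]
    exact Even.add (by simp [pairList]) ih

theorem sum_pairList_range (k : ℕ) : (pairList i j (List.range k)).sum = blockStart i j k := by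
  induction k with
  | zero => simp [pairList, blockStart]
  | succ k ih =>
    rw [List.range_succ, pairList_append, List.sum_append, ih, blockStart_succ]
    simp [pairList]

theorem pairList_range_eq_append {n k : ℕ} (hk : k < n) :
    pairList i j (List.range n) =
      pairList i j (List.range k) ++
        i k :: j k :: pairList i j ((List.range n).drop (k + 1)) := by
  conv_lhs => rw [← List.take_append_drop (k + 1) (List.range n), List.take_range,
    min_eq_left hk, List.range_succ]
  simp [pairList]

theorem ascentWord_pairList_range {n k t : ℕ} (hk : k < n) (ht : t < i k + j k) :
    ascentWord (pairList i j (List.range n)) (blockStart i j k + t) = decide (t < i k) := by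
  rw [pairList_range_eq_append i j hk, ← sum_pairList_range,
    ascentWord_append_sum_add (even_length_pairList i j _), ascentWord_cons_cons _ _ _ ht]

end PairList

section Valleys

variable {i j : ℕ → ℕ} {n : ℕ}

theorem exists_blockStart_le_lt {q : ℕ} (hq : q < blockStart i j n) :
    ∃ k < n, blockStart i j k ≤ q ∧ q < blockStart i j (k + 1) := by
  induction n with
  | zero => simp [blockStart] at hq
  | succ n ih =>
    by_cases hqn : q < blockStart i j n
    · obtain ⟨k, hk, hkq⟩ := ih hqn
      exact ⟨k, by omega, hkq⟩
    · exact ⟨n, by omega, by omega, hq⟩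

theorem blockStart_strictMonoOn (hi : ∀ k < n, 0 < i k) :
    StrictMonoOn (blockStart i j) (Set.Iic n) :=
  strictMonoOn_Iic_of_lt_succ fun k hk => by
    rw [Order.succ_eq_add_one, blockStart_succ]
    have := hi k hk
    omega

variable {w : ℕ → Bool} (hi : ∀ k < n, 0 < i k) (hj : ∀ k < n, 0 < j k)
  (hw : ∀ k < n, ∀ t < i k + j k, w (blockStart i j k + t) = decide (t < i k))
include hi hj hw

theorem isValley_iff_exists_blockStart {p : ℕ} (hp : p ≤ blockStart i j n) :
    IsValley w (blockStart i j n) p ↔ ∃ k ≤ n, blockStart i j k = p := by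
  constructor
  · rintro ⟨hdesc, hasc⟩
    rcases hp.eq_or_lt with rfl | hlt
    · exact ⟨n, le_rfl, rfl⟩
    obtain ⟨k, hk, hkp, hpk⟩ := exists_blockStart_le_lt hlt
    refine ⟨k, hk.le, hkp.antisymm ?_⟩
    by_contra! hkp'
    have hrun := blockStart_succ i j k
    have hp_asc : p - blockStart i j k < i k := by
      by_contra! h
      have hw_p := hw k hk (p - blockStart i j k) (by omega)
      rw [Nat.add_sub_cancel' hkp, hasc.resolve_left hlt.ne, decide_eq_false (by omega)] at hw_p
      exact absurd hw_p (by decide)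
    have hw_prev := hw k hk (p - 1 - blockStart i j k) (by omega)
    rw [show blockStart i j k + (p - 1 - blockStart i j k) = p - 1 by omega,
      decide_eq_true (by omega)] at hw_prev
    exact absurd (hw_prev.symm.trans (hdesc.resolve_left (by omega))) (by decide)
  · rintro ⟨k, hk, rfl⟩
    constructor
    · rcases k with _ | k
      · exact Or.inl rfl
      · right
        have hjk := hj k hk
        have hlast := hw k hk (i k + j k - 1) (by omega)
        rw [decide_eq_false (by omega)] at hlast
        rw [blockStart_succ, ← hlast]
        congr 1
        omega
    · rcases hk.eq_or_lt with rfl | hkn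
      · exact Or.inl rfl
      · exact Or.inr (by simpa [hi k hkn] using hw k hkn 0 (by have := hi k hkn; omega))

theorem sum_ite_isValley (f : ℕ → ℕ) :
    ∑ p ∈ range (blockStart i j n + 1), (if IsValley w (blockStart i j n) p then f p else 0) =
      ∑ k ∈ range (n + 1), f (blockStart i j k) := by
  have hmono := blockStart_strictMonoOn (j := j) hi
  rw [← sum_filter, ← sum_image (g := blockStart i j) fun k hk k' hk' h =>
    hmono.injOn (by simpa [Nat.lt_succ_iff] using hk) (by simpa [Nat.lt_succ_iff] using hk') h]
  congr 1
  ext p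
  simp only [mem_filter, mem_range, mem_image, Nat.lt_succ_iff]
  constructor
  · rintro ⟨hp, hv⟩
    obtain ⟨k, hk, rfl⟩ := (isValley_iff_exists_blockStart hi hj hw hp).1 hv
    exact ⟨k, hk, rfl⟩
  · rintro ⟨k, hk, rfl⟩
    have hle := blockStart_mono i j hk
    exact ⟨hle, (isValley_iff_exists_blockStart hi hj hw hle).2 ⟨k, hk, rfl⟩⟩

end Valleys

theorem upDownCount_eq_one_of_le_one {m : ℕ} (hm : m ≤ 1) (w : ℕ → Bool) :
    upDownCount m w = 1 := by
  have : Subsingleton (Fin m) := Fin.subsingleton_iff_le_one.2 hm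
  rw [upDownCount, Nat.card_eq_one_iff_unique]
  exact ⟨inferInstance, ⟨⟨1, fun q hq => by omega⟩⟩⟩

theorem omega'_nil : Omega' [] = 1 := by
  simp [omega'_eq_upDownCount, upDownCount_eq_one_of_le_one]

section Factors

variable {i j : ℕ → ℕ} {n : ℕ}

theorem omega'_left (hj : ∀ k < n, 0 < j k) {k : ℕ} (hk : k ≤ n) :
    Omega' (if k = 0 then []
      else pairList i j (List.range (k - 1)) ++ [i (k - 1), j (k - 1) - 1]) =
    upDownCount (blockStart i j k) (ascentWord (pairList i j (List.range n))) /
      (blockStart i j k)! := by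
  rcases k with _ | k
  · simp [omega'_nil, blockStart, upDownCount_eq_one_of_le_one]
  have hjk := hj k hk
  have hrun := blockStart_succ i j k
  have hsum :
      (pairList i j (List.range k) ++ [i k, j k - 1]).sum + 1 = blockStart i j (k + 1) := by
    rw [List.sum_append, sum_pairList_range, hrun, List.sum_cons, List.sum_cons, List.sum_nil]
    omega
  simp only [Nat.add_one_ne_zero, if_false, Nat.add_sub_cancel, omega'_eq_upDownCount, hsum]
  congr 2
  refine upDownCount_congr fun q hq => ?_
  rw [pairList_range_eq_append i j hk]
  rcases Nat.lt_or_ge q (blockStart i j k) with hq' | hq'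
  · rw [← sum_pairList_range] at hq'
    rw [ascentWord_append_of_lt _ hq', ascentWord_append_of_lt _ hq']
  · obtain ⟨t, rfl⟩ : ∃ t, q = (pairList i j (List.range k)).sum + t :=
      ⟨q - blockStart i j k, by rw [sum_pairList_range]; omega⟩
    rw [sum_pairList_range] at hq
    rw [ascentWord_append_sum_add (even_length_pairList i j _),
      ascentWord_append_sum_add (even_length_pairList i j _),
      ascentWord_cons_cons _ _ _ (by omega), ascentWord_cons_cons _ _ _ (by omega)]

theorem omega'_right (hi : ∀ k < n, 0 < i k) {k : ℕ} (hk : k ≤ n) :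
    Omega' (if k = n then []
      else (i k - 1) :: j k :: pairList i j ((List.range n).drop (k + 1))) =
    upDownCount (blockStart i j n - blockStart i j k)
        (fun t => ascentWord (pairList i j (List.range n)) (blockStart i j k + 1 + t)) /
      (blockStart i j n - blockStart i j k)! := by
  rcases hk.eq_or_lt with rfl | hkn
  · simp [omega'_nil, upDownCount_eq_one_of_le_one]
  have hik := hi k hkn
  have hsplit := congrArg List.sum (pairList_range_eq_append i j hkn)
  simp only [List.sum_append, List.sum_cons, sum_pairList_range] at hsplit
  have hsum : ((i k - 1) :: j k :: pairList i j ((List.range n).drop (k + 1))).sum + 1 =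
      blockStart i j n - blockStart i j k := by
    simp only [List.sum_cons]
    omega
  simp only [hkn.ne, if_false, omega'_eq_upDownCount, hsum]
  congr 2
  refine upDownCount_congr fun q _ => ?_
  rw [pairList_range_eq_append i j hkn, ← sum_pairList_range, add_assoc, add_comm 1 q,
    ascentWord_append_sum_add (even_length_pairList i j _), ascentWord_cons_succ hik]

end Factors

theorem choose_mul_div_factorial_succ {N p : ℕ} (hp : p ≤ N) (A B : ℕ) :
    ((N.choose p * (A * B) : ℕ) : ℝ) / (N + 1)! =
      1 / ((N : ℝ) + 1) * ((A : ℝ) / p ! * ((B : ℝ) / (N - p)!)) := by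
  rw [Nat.cast_mul, Nat.cast_choose ℝ hp, Nat.factorial_succ]
  push_cast
  field_simp

theorem stmt_8_general (n : ℕ) (i j : ℕ → ℕ)
    (hi : ∀ k < n, 0 < i k) (hj : ∀ k < n, 0 < j k) :
    Omega' (pairList i j (List.range n)) =
      (1 / ((∑ k ∈ Finset.range n, (i k + j k) : ℕ) + 1 : ℝ)) *
        ∑ k ∈ Finset.range (n + 1),
          Omega' (if k = 0 then []
            else pairList i j (List.range (k - 1)) ++ [i (k - 1), j (k - 1) - 1]) *
          Omega' (if k = n then []
            else (i k - 1) :: j k :: pairList i j ((List.range n).drop (k + 1))) := by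
  change _ = 1 / ((blockStart i j n : ℝ) + 1) * _
  rw [omega'_eq_upDownCount, sum_pairList_range, upDownCount_succ, sum_ite_isValley hi hj
    (fun k hk t ht => ascentWord_pairList_range i j hk ht),
    Nat.cast_sum, sum_div, mul_sum]
  refine sum_congr rfl fun k hk => ?_
  have hkn : k ≤ n := Nat.lt_succ_iff.1 (mem_range.1 hk)
  rw [omega'_left hj hkn, omega'_right hi hkn,
    choose_mul_div_factorial_succ (blockStart_mono i j hkn)]

theorem stmt_8 (n : ℕ) (hn : 1 ≤ n) (i j : ℕ → ℕ)
    (hi : ∀ k < n, 0 < i k) (hj : ∀ k < n, 0 < j k) :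
    Omega' (pairList i j (List.range n)) =
      (1 / ((∑ k ∈ Finset.range n, (i k + j k) : ℕ) + 1 : ℝ)) *
        ∑ k ∈ Finset.range (n + 1),
          Omega' (if k = 0 then []
            else pairList i j (List.range (k - 1)) ++ [i (k - 1), j (k - 1) - 1]) *
          Omega' (if k = n then []
            else (i k - 1) :: j k :: pairList i j ((List.range n).drop (k + 1))) :=
  stmt_8_general n i j hi hj
end
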